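/- Let 0 < r0 < R ≤ ∞ and let φ : (r0,R) → [0,∞) satisfy limsup_{r→R⁻} φ(r) = K and liminf_{r→R⁻} φ(r) = k with 0 ≤ k < K < ∞. Suppose there exists ψ ∈ D(r0,R) such that φ(r)ψ(r) is non-decreasing on (r0,R). Then for every ε > 0, the set G_ε = {r ∈ (r0,R) : |φ(r) − k| < ε} has upper ψ-density at least ε/(k+ε). -/

import Mathlib

open MeasureTheory Filter Set
open scoped ENNReal

/-- The filter of real numbers tending to `R` from below (equals `atTop` when `R = ⊤`). -/
noncomputable def densFilter (R : EReal) : Filter ℝ :=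
  Filter.comap (fun x : ℝ => (x : EReal)) (nhdsWithin R (Set.Iio R))

/-- The interval `(r0, R)` as a set of reals. -/
def psiDomain (r0 : ℝ) (R : EReal) : Set ℝ := {r : ℝ | r0 < r ∧ (r : EReal) < R}

/-- Barry's class `𝒟(r0,R)`: positive, unbounded, differentiable, strictly increasing
functions on `(r0, R)`. -/
structure PsiClass (r0 : ℝ) (R : EReal) (ψ : ℝ → ℝ) : Prop where
  pos : ∀ r ∈ psiDomain r0 R, 0 < ψ r
  unbounded : Filter.Tendsto ψ (densFilter R) Filter.atTop
  differentiable : ∀ r ∈ psiDomain r0 R, DifferentiableAt ℝ ψ r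
  strictMono : StrictMonoOn ψ (psiDomain r0 R)

/-- The upper `ψ`-density of a set `E ⊆ (r0, R)`:
`limsup_{r→R⁻} (1/ψ(r)) ∫_{E∩[r0,r)} ψ'(t) dt`. -/
noncomputable def upperPsiDens (r0 : ℝ) (R : EReal) (ψ : ℝ → ℝ) (E : Set ℝ) : ℝ :=
  Filter.limsup (fun r => (∫ t in E ∩ Set.Ico r0 r, deriv ψ t) / ψ r) (densFilter R)

/-- The lower `ψ`-density of a set `E ⊆ (r0, R)`. -/
noncomputable def lowerPsiDens (r0 : ℝ) (R : EReal) (ψ : ℝ → ℝ) (E : Set ℝ) : ℝ :=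
  Filter.liminf (fun r => (∫ t in E ∩ Set.Ico r0 r, deriv ψ t) / ψ r) (densFilter R)

set_option maxHeartbeats 1000000

section AuxiliaryLemmas

variable {r0 : ℝ} {R : EReal} {ψ : ℝ → ℝ}

lemma psiDomain_ordConn {a b x : ℝ} (ha : a ∈ psiDomain r0 R) (hb : b ∈ psiDomain r0 R)
    (hax : a ≤ x) (hxb : x ≤ b) : x ∈ psiDomain r0 R :=
  ⟨lt_of_lt_of_le ha.1 hax, lt_of_le_of_lt (EReal.coe_le_coe_iff.2 hxb) hb.2⟩

lemma psiDomain_isOpen : IsOpen (psiDomain r0 R) := by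
  have : psiDomain r0 R = Ioi r0 ∩ (fun x : ℝ => (x : EReal)) ⁻¹' (Iio R) := rfl
  rw [this]
  exact isOpen_Ioi.inter (isOpen_Iio.preimage continuous_coe_real_ereal)

lemma PsiClass.monotoneOn (hψ : PsiClass r0 R ψ) : MonotoneOn ψ (psiDomain r0 R) :=
  hψ.strictMono.monotoneOn

lemma PsiClass.deriv_nonneg (hψ : PsiClass r0 R ψ) {x : ℝ} (hx : x ∈ psiDomain r0 R) :
    0 ≤ deriv ψ x := by
  have h := (hψ.differentiable x hx).hasDerivAt
  rw [hasDerivAt_iff_tendsto_slope] at h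
  refine ge_of_tendsto h ?_
  have hmem : psiDomain r0 R ∈ nhds x := psiDomain_isOpen.mem_nhds hx
  have : ∀ᶠ y in nhdsWithin x {x}ᶜ, y ∈ psiDomain r0 R ∧ y ≠ x := by
    refine Filter.Eventually.and ?_ ?_
    · exact eventually_nhdsWithin_of_eventually_nhds (eventually_of_mem hmem fun y hy => hy)
    · exact eventually_mem_nhdsWithin.mono fun y hy => hy
  refine this.mono fun y ⟨hyD, hyx⟩ => ?_
  rcases lt_or_gt_of_ne hyx with hlt | hgt
  · rw [slope_def_field]
    rw [div_nonneg_iff]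
    right
    constructor
    · simp only [sub_nonpos]
      exact (hψ.strictMono hyD hx hlt).le
    · linarith
  · rw [slope_def_field, div_nonneg_iff]
    left
    constructor
    · simp only [sub_nonneg]
      exact (hψ.strictMono hx hyD hgt).le
    · linarith

lemma PsiClass.continuousOn_Icc (hψ : PsiClass r0 R ψ) {a b : ℝ} (ha : a ∈ psiDomain r0 R)
    (hb : b ∈ psiDomain r0 R) : ContinuousOn ψ (Icc a b) := fun x hx =>
  ((hψ.differentiable x (psiDomain_ordConn ha hb hx.1 hx.2)).continuousAt).continuousWithinAt

lemma PsiClass.intervalIntegrable (hψ : PsiClass r0 R ψ) {a b : ℝ} (ha : a ∈ psiDomain r0 R)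
    (hb : b ∈ psiDomain r0 R) (hab : a ≤ b) : IntervalIntegrable (deriv ψ) volume a b := by
  apply intervalIntegral.intervalIntegrable_deriv_of_nonneg
  · rw [uIcc_of_le hab]; exact hψ.continuousOn_Icc ha hb
  · intro x hx
    rw [min_eq_left hab, max_eq_right hab] at hx
    exact (hψ.differentiable x (psiDomain_ordConn ha hb hx.1.le hx.2.le)).hasDerivAt
  · intro x hx
    rw [min_eq_left hab, max_eq_right hab] at hx
    exact hψ.deriv_nonneg (psiDomain_ordConn ha hb hx.1.le hx.2.le)

lemma PsiClass.integral_Ioo (hψ : PsiClass r0 R ψ) {a b : ℝ} (ha : a ∈ psiDomain r0 R)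
    (hb : b ∈ psiDomain r0 R) (hab : a ≤ b) :
    ∫ t in Ioo a b, deriv ψ t = ψ b - ψ a := by
  rw [← integral_Ioc_eq_integral_Ioo, ← intervalIntegral.integral_of_le hab]
  apply intervalIntegral.integral_eq_sub_of_hasDerivAt
  · intro x hx
    rw [uIcc_of_le hab] at hx
    exact (hψ.differentiable x (psiDomain_ordConn ha hb hx.1 hx.2)).hasDerivAt
  · exact hψ.intervalIntegrable ha hb hab

lemma PsiClass.integrableOn_Ioo (hψ : PsiClass r0 R ψ) {a b : ℝ} (ha : a ∈ psiDomain r0 R)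
    (hb : b ∈ psiDomain r0 R) (hab : a ≤ b) : IntegrableOn (deriv ψ) (Ioo a b) :=
  ((hψ.intervalIntegrable ha hb hab).1).mono_set Ioo_subset_Ioc_self

lemma PsiClass.lintegral_Ioo_le (hψ : PsiClass r0 R ψ) {b : ℝ} (hb : b ∈ psiDomain r0 R) :
    ∫⁻ t in Ioo r0 b, ENNReal.ofReal (deriv ψ t) ≤ ENNReal.ofReal (ψ b) := by
  set a : ℕ → ℝ := fun n => r0 + (b - r0) / (n + 1) with ha
  have hbr0 : 0 < b - r0 := sub_pos.2 hb.1
  have h1 : ∀ n : ℕ, r0 < a n := by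
    intro n
    have : 0 < (b - r0) / ((n : ℝ) + 1) := by positivity
    simp only [ha]; linarith
  have h2 : ∀ n : ℕ, a n ≤ b := by
    intro n
    have : (b - r0) / ((n : ℝ) + 1) ≤ b - r0 := by
      apply div_le_self hbr0.le
      linarith [Nat.cast_nonneg (α := ℝ) n]
    simp only [ha]; linarith
  have haD : ∀ n, a n ∈ psiDomain r0 R :=
    fun n => ⟨h1 n, lt_of_le_of_lt (EReal.coe_le_coe_iff.2 (h2 n)) hb.2⟩
  have hanti : ∀ m n : ℕ, m ≤ n → a n ≤ a m := by
    intro m n hmn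
    have : (b - r0) / ((n : ℝ) + 1) ≤ (b - r0) / ((m : ℝ) + 1) := by
      apply div_le_div_of_nonneg_left hbr0.le (by positivity)
      exact_mod_cast Nat.add_le_add_right hmn 1
    simp only [ha]; linarith
  set F : ℝ → ℝ≥0∞ := fun t => ENNReal.ofReal (deriv ψ t) with hF
  have hFmeas : Measurable F := (measurable_deriv ψ).ennreal_ofReal
  have hmono : Monotone fun n => (Ioo (a n) b).indicator F := by
    intro m n hmn
    apply indicator_le_indicator_of_subset (Ioo_subset_Ioo_left (hanti m n hmn))
    intro x; exact zero_le
  have hsup : ∀ t, ⨆ n, (Ioo (a n) b).indicator F t = (Ioo r0 b).indicator F t := by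
    intro t
    by_cases ht : t ∈ Ioo r0 b
    · rw [indicator_of_mem ht]
      apply le_antisymm
      · apply iSup_le
        intro n
        by_cases h : t ∈ Ioo (a n) b
        · rw [indicator_of_mem h]
        · rw [indicator_of_notMem h]; exact zero_le
      · obtain ⟨n, hn⟩ : ∃ n : ℕ, (b - r0) / ((n : ℝ) + 1) < t - r0 := by
          obtain ⟨n, hn⟩ := exists_nat_gt ((b - r0) / (t - r0))
          refine ⟨n, ?_⟩
          rw [div_lt_iff₀ (by positivity)]
          rw [div_lt_iff₀ (by exact sub_pos.2 ht.1)] at hn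
          nlinarith [sub_pos.2 ht.1]
        have : t ∈ Ioo (a n) b := ⟨by simp only [ha]; linarith, ht.2⟩
        calc F t = (Ioo (a n) b).indicator F t := (indicator_of_mem this F).symm
          _ ≤ ⨆ n, (Ioo (a n) b).indicator F t :=
            le_iSup (fun n => (Ioo (a n) b).indicator F t) n
    · rw [indicator_of_notMem ht]
      rw [← le_zero_iff]
      apply iSup_le
      intro n
      have : t ∉ Ioo (a n) b := fun h => ht ⟨(h1 n).trans h.1, h.2⟩
      rw [indicator_of_notMem this]
  have key : ∀ n, ∫⁻ t in Ioo (a n) b, F t ≤ ENNReal.ofReal (ψ b) := by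
    intro n
    have hint := hψ.integrableOn_Ioo (haD n) hb (h2 n)
    have hnn : 0 ≤ᵐ[volume.restrict (Ioo (a n) b)] deriv ψ := by
      rw [Filter.EventuallyLE, ae_restrict_iff' measurableSet_Ioo]
      exact Filter.Eventually.of_forall fun x hx =>
        hψ.deriv_nonneg (psiDomain_ordConn (haD n) hb hx.1.le hx.2.le)
    have := ofReal_integral_eq_lintegral_ofReal hint hnn
    rw [hF, ← this, hψ.integral_Ioo (haD n) hb (h2 n)]
    apply ENNReal.ofReal_le_ofReal
    have := (hψ.pos _ (haD n)).le
    linarith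
  calc ∫⁻ t in Ioo r0 b, F t = ∫⁻ t, (Ioo r0 b).indicator F t := by
        rw [lintegral_indicator measurableSet_Ioo]
    _ = ∫⁻ t, ⨆ n, (Ioo (a n) b).indicator F t := by
        simp_rw [hsup]
    _ = ⨆ n, ∫⁻ t, (Ioo (a n) b).indicator F t :=
        lintegral_iSup (fun n => hFmeas.indicator measurableSet_Ioo) hmono
    _ ≤ ENNReal.ofReal (ψ b) := by
        apply iSup_le
        intro n
        rw [lintegral_indicator measurableSet_Ioo]
        exact key n

lemma PsiClass.integrableOn_Ioo_r0 (hψ : PsiClass r0 R ψ) {b : ℝ} (hb : b ∈ psiDomain r0 R) :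
    IntegrableOn (deriv ψ) (Ioo r0 b) := by
  constructor
  · exact (measurable_deriv ψ).aestronglyMeasurable
  · rw [hasFiniteIntegral_iff_norm]
    have : ∀ᵐ t ∂(volume.restrict (Ioo r0 b)),
        ENNReal.ofReal ‖deriv ψ t‖ = ENNReal.ofReal (deriv ψ t) := by
      rw [ae_restrict_iff' measurableSet_Ioo]
      refine Filter.Eventually.of_forall fun x hx => ?_
      have hxD : x ∈ psiDomain r0 R :=
        ⟨hx.1, lt_of_le_of_lt (EReal.coe_le_coe_iff.2 hx.2.le) hb.2⟩
      rw [Real.norm_of_nonneg (hψ.deriv_nonneg hxD)]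
    rw [lintegral_congr_ae this]
    exact lt_of_le_of_lt (hψ.lintegral_Ioo_le hb) ENNReal.ofReal_lt_top

lemma PsiClass.setIntegral_Ioo_r0_le (hψ : PsiClass r0 R ψ) {b : ℝ} (hb : b ∈ psiDomain r0 R) :
    ∫ t in Ioo r0 b, deriv ψ t ≤ ψ b := by
  have hnn : 0 ≤ᵐ[volume.restrict (Ioo r0 b)] deriv ψ := by
    rw [Filter.EventuallyLE, ae_restrict_iff' measurableSet_Ioo]
    refine Filter.Eventually.of_forall fun x hx => ?_
    exact hψ.deriv_nonneg ⟨hx.1, lt_of_le_of_lt (EReal.coe_le_coe_iff.2 hx.2.le) hb.2⟩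
  rw [integral_eq_lintegral_of_nonneg_ae hnn ((measurable_deriv ψ).aestronglyMeasurable)]
  have := hψ.lintegral_Ioo_le hb
  calc (∫⁻ t in Ioo r0 b, ENNReal.ofReal (deriv ψ t)).toReal
      ≤ (ENNReal.ofReal (ψ b)).toReal := ENNReal.toReal_mono ENNReal.ofReal_ne_top this
    _ = ψ b := ENNReal.toReal_ofReal (hψ.pos b hb).le

/-- monotone comparison of set integrals of `deriv ψ` for arbitrary subsets of `Ioo r0 b`. -/
lemma PsiClass.setIntegral_mono_sets (hψ : PsiClass r0 R ψ) {b : ℝ} (hb : b ∈ psiDomain r0 R)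
    {s t : Set ℝ} (hst : s ⊆ t) (ht : t ⊆ Ioo r0 b) :
    ∫ u in s, deriv ψ u ≤ ∫ u in t, deriv ψ u := by
  have h2 : 0 ≤ᵐ[volume.restrict (Ioo r0 b)] deriv ψ := by
    rw [Filter.EventuallyLE, ae_restrict_iff' measurableSet_Ioo]
    refine Filter.Eventually.of_forall fun x hx => ?_
    exact hψ.deriv_nonneg ⟨hx.1, lt_of_le_of_lt (EReal.coe_le_coe_iff.2 hx.2.le) hb.2⟩
  refine integral_mono_measure (Measure.restrict_mono hst le_rfl) ?_ ?_
  · exact ae_restrict_of_ae_restrict_of_subset ht h2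
  · exact (hψ.integrableOn_Ioo_r0 hb).mono_set ht

lemma key_estimate (hψ : PsiClass r0 R ψ) {φ : ℝ → ℝ}
    (hmono : MonotoneOn (fun r => φ r * ψ r) (psiDomain r0 R))
    {k ε δ : ℝ} (hk0 : 0 ≤ k) (hδ : 0 < δ) (hδε : δ < ε)
    {r1 : ℝ} (hr1 : r1 ∈ psiDomain r0 R)
    (H1 : ∀ s : ℝ, r1 < s → (s : EReal) < R → k - ε < φ s)
    {t : ℝ} (ht : t ∈ psiDomain r0 R) (hr1t : r1 < t) (hφt : φ t < k + δ) :
    ψ t - (k + δ) / (k + ε) * ψ t - ψ r1 ≤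
      ∫ s in {r | r ∈ psiDomain r0 R ∧ |φ r - k| < ε} ∩ Ico r0 t, deriv ψ s := by
  have hε : 0 < ε := hδ.trans hδε
  have hkε : 0 < k + ε := by linarith
  set θ : ℝ := (k + δ) / (k + ε) with hθ
  have hθ1 : θ < 1 := (div_lt_one hkε).2 (by linarith)
  have hψt : 0 < ψ t := hψ.pos t ht
  have hψr1 : 0 < ψ r1 := hψ.pos r1 hr1
  set S : Set ℝ := {s | s ∈ Ioo r1 t ∧ ψ s ≤ θ * ψ t} with hS
  set c : ℝ := sSup (insert r1 S) with hc
  have hbdd : BddAbove (insert r1 S) := by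
    refine ⟨t, ?_⟩
    rintro x (rfl | hx)
    · exact hr1t.le
    · exact hx.1.2.le
  have hne : (insert r1 S).Nonempty := ⟨r1, mem_insert _ _⟩
  have hcr1 : r1 ≤ c := le_csSup hbdd (mem_insert _ _)
  have hcle : c ≤ t := csSup_le hne (by rintro x (rfl | hx); exacts [hr1t.le, hx.1.2.le])
  have hcD : c ∈ psiDomain r0 R := psiDomain_ordConn hr1 ht hcr1 hcle
  have hψc : ψ c ≤ max (ψ r1) (θ * ψ t) := by
    rcases eq_or_lt_of_le hcr1 with heq | hlt
    · rw [← heq]; exact le_max_left _ _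
    · refine le_trans ?_ (le_max_right _ _)
      by_contra hcon
      push_neg at hcon
      have hcont : ContinuousAt ψ c := (hψ.differentiable c hcD).continuousAt
      have hev : ∀ᶠ s in nhds c, θ * ψ t < ψ s :=
        (continuousAt_const).eventually_lt hcont hcon
      obtain ⟨η, hη, hball⟩ := Metric.eventually_nhds_iff.1 hev
      set η' := min η (c - r1) with hη'
      have hη'pos : 0 < η' := lt_min hη (by linarith)
      obtain ⟨x, hxmem, hxgt⟩ := exists_lt_of_lt_csSup hne (by linarith : c - η' < c)
      have hxc : x ≤ c := le_csSup hbdd hxmem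
      have hxS : x ∈ S := by
        rcases hxmem with rfl | h
        · exfalso
          have : η' ≤ c - x := min_le_right _ _
          linarith
        · exact h
      have : θ * ψ t < ψ x := by
        apply hball
        rw [Real.dist_eq, abs_lt]
        constructor
        · have : η' ≤ η := min_le_left _ _
          linarith
        · linarith [hη]
      exact absurd hxS.2 (not_le.2 this)
  have hct : c < t := by
    rcases lt_or_eq_of_le hcle with h | h
    · exact h
    · exfalso
      rw [h] at hψc
      have h1 : ψ r1 < ψ t := hψ.strictMono hr1 ht hr1t
      have h2 : θ * ψ t < ψ t := by nlinarith
      rcases max_cases (ψ r1) (θ * ψ t) with ⟨hm, _⟩ | ⟨hm, _⟩ <;> rw [hm] at hψc <;> linarith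
  have hsub : Ioo c t ⊆ {r | r ∈ psiDomain r0 R ∧ |φ r - k| < ε} ∩ Ico r0 t := by
    intro s hs
    have hsD : s ∈ psiDomain r0 R := psiDomain_ordConn hcD ht hs.1.le hs.2.le
    have hlow : k - ε < φ s := H1 s (lt_of_le_of_lt hcr1 hs.1) hsD.2
    have hhigh : φ s < k + ε := by
      by_contra hcon
      push_neg at hcon
      have hψs : 0 < ψ s := hψ.pos s hsD
      have hchain : (k + ε) * ψ s ≤ (k + δ) * ψ t := by
        calc (k + ε) * ψ s ≤ φ s * ψ s := by nlinarith
          _ ≤ φ t * ψ t := hmono hsD ht hs.2.le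
          _ ≤ (k + δ) * ψ t := by nlinarith
      have hψsθ : ψ s ≤ θ * ψ t := by
        rw [hθ, div_mul_eq_mul_div, le_div_iff₀ hkε]
        linarith [hchain]
      have hsS : s ∈ S := ⟨⟨lt_of_le_of_lt hcr1 hs.1, hs.2⟩, hψsθ⟩
      have : s ≤ c := le_csSup hbdd (mem_insert_of_mem _ hsS)
      linarith [hs.1]
    refine ⟨⟨hsD, abs_lt.2 ⟨by linarith, by linarith⟩⟩, ⟨(hr1.1.trans (lt_of_le_of_lt hcr1 hs.1)).le, hs.2⟩⟩
  have hIoo : Ioo c t ⊆ Ioo r0 t := Ioo_subset_Ioo_left (lt_of_lt_of_le hr1.1 hcr1).le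
  have hGsub : {r | r ∈ psiDomain r0 R ∧ |φ r - k| < ε} ∩ Ico r0 t ⊆ Ioo r0 t :=
    fun x hx => ⟨hx.1.1.1, hx.2.2⟩
  have hθ0 : 0 ≤ θ := div_nonneg (by linarith) hkε.le
  have hψc' : ψ c ≤ ψ r1 + θ * ψ t :=
    le_trans hψc (max_le (by nlinarith) (by nlinarith))
  calc ψ t - θ * ψ t - ψ r1
      ≤ ψ t - ψ c := by linarith
    _ = ∫ s in Ioo c t, deriv ψ s := (hψ.integral_Ioo hcD ht hct.le).symm
    _ ≤ ∫ s in {r | r ∈ psiDomain r0 R ∧ |φ r - k| < ε} ∩ Ico r0 t, deriv ψ s := by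
        apply hψ.setIntegral_mono_sets ht ?_ hGsub
        · intro x hx
          exact hsub hx
lemma densFilter_eventually_gt {a : ℝ} (ha : (a : EReal) < R) :
    ∀ᶠ r in densFilter R, a < r ∧ (r : EReal) < R := by
  have hmem : Ioi (a : EReal) ∩ Iio R ∈ nhdsWithin R (Iio R) :=
    Filter.inter_mem (mem_nhdsWithin_of_mem_nhds (isOpen_Ioi.mem_nhds ha)) self_mem_nhdsWithin
  have : (fun x : ℝ => (x : EReal)) ⁻¹' (Ioi (a : EReal) ∩ Iio R) ∈ densFilter R :=
    Filter.preimage_mem_comap hmem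
  refine Filter.eventually_of_mem this fun x hx => ?_
  exact ⟨EReal.coe_lt_coe_iff.1 hx.1, hx.2⟩

lemma densFilter_extract (hr0R : (r0 : EReal) < R) {P : ℝ → Prop}
    (hev : ∀ᶠ r in densFilter R, P r) :
    ∃ r1 : ℝ, r1 ∈ psiDomain r0 R ∧ ∀ s : ℝ, r1 < s → (s : EReal) < R → P s := by
  rw [densFilter, Filter.eventually_comap] at hev
  obtain ⟨t, ht, hsub⟩ := Filter.eventually_iff_exists_mem.1 hev
  obtain ⟨l, hlR, hIoo⟩ := (mem_nhdsLT_iff_exists_Ioo_subset' hr0R).1 ht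
  have hmax : max l (r0 : EReal) < R := max_lt hlR hr0R
  obtain ⟨x, hx1, hx2⟩ := EReal.lt_iff_exists_real_btwn.1 hmax
  refine ⟨x, ⟨?_, hx2⟩, fun s hs hsR => ?_⟩
  · exact_mod_cast lt_of_le_of_lt (le_max_right _ _) hx1
  · have hls : l < (s : EReal) :=
      lt_trans (lt_of_le_of_lt (le_max_left _ _) hx1) (EReal.coe_lt_coe_iff.2 hs)
    exact hsub (s : EReal) (hIoo ⟨hls, hsR⟩) s rfl


end AuxiliaryLemmas

theorem statement3 (r0 : ℝ) (R : EReal) (hr0 : 0 < r0) (hr0R : (r0 : EReal) < R)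
    (φ : ℝ → ℝ) (hφ : ∀ r ∈ psiDomain r0 R, 0 ≤ φ r)
    (K k : ℝ) (hk0 : 0 ≤ k) (hkK : k < K)
    (hK : Filter.limsup (fun r => ((φ r : ℝ) : EReal)) (densFilter R) = (K : EReal))
    (hk : Filter.liminf (fun r => ((φ r : ℝ) : EReal)) (densFilter R) = (k : EReal))
    (ψ : ℝ → ℝ) (hψ : PsiClass r0 R ψ)
    (hmono : MonotoneOn (fun r => φ r * ψ r) (psiDomain r0 R))
    (ε : ℝ) (hε : 0 < ε) :
    ε / (k + ε) ≤ upperPsiDens r0 R ψ {r | r ∈ psiDomain r0 R ∧ |φ r - k| < ε} := by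

  set G : Set ℝ := {r | r ∈ psiDomain r0 R ∧ |φ r - k| < ε} with hG
  set f : ℝ → ℝ := fun r => (∫ t in G ∩ Set.Ico r0 r, deriv ψ t) / ψ r with hf
  have hkε : 0 < k + ε := by linarith
  -- boundedness above
  have hbound : ∀ᶠ r in densFilter R, f r ≤ 1 := by
    refine (densFilter_eventually_gt hr0R).mono fun r hr => ?_
    have hrD : r ∈ psiDomain r0 R := hr
    have h1 : ∫ t in G ∩ Set.Ico r0 r, deriv ψ t ≤ ∫ t in Ioo r0 r, deriv ψ t := by
      refine hψ.setIntegral_mono_sets hrD ?_ (fun x hx => hx)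
      exact fun x hx => ⟨hx.1.1.1, hx.2.2⟩
    have h2 := hψ.setIntegral_Ioo_r0_le hrD
    rw [hf]
    rw [div_le_one (hψ.pos r hrD)]
    exact h1.trans h2
  have hb : IsBoundedUnder (· ≤ ·) (densFilter R) f :=
    isBoundedUnder_of_eventually_le hbound
  -- eventual lower bound for φ
  have hlow : ∀ᶠ r in densFilter R, k - ε < φ r := by
    have h : ((k - ε : ℝ) : EReal) < Filter.liminf (fun r => ((φ r : ℝ) : EReal)) (densFilter R) := by
      rw [hk]; exact_mod_cast (by linarith : k - ε < k)
    exact (eventually_lt_of_lt_liminf h).mono fun r hr => EReal.coe_lt_coe_iff.1 hr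
  obtain ⟨r1, hr1D, H1⟩ := densFilter_extract hr0R hlow
  rw [upperPsiDens]
  refine le_of_forall_pos_le_add fun γ hγ => ?_
  set δ : ℝ := min (ε / 2) (γ * (k + ε) / 2) with hδdef
  have hδ : 0 < δ := lt_min (by linarith) (by positivity)
  have hδε : δ < ε := lt_of_le_of_lt (min_le_left _ _) (by linarith)
  have hδγ : δ / (k + ε) ≤ γ / 2 := by
    rw [div_le_iff₀ hkε]
    calc δ ≤ γ * (k + ε) / 2 := min_le_right _ _
      _ = γ / 2 * (k + ε) := by ring
  set η : ℝ := γ / 2 with hηdef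
  have hη : 0 < η := by positivity
  -- frequently φ r < k + δ
  have hfreq : ∃ᶠ r in densFilter R, φ r < k + δ := by
    have h : Filter.liminf (fun r => ((φ r : ℝ) : EReal)) (densFilter R) < ((k + δ : ℝ) : EReal) := by
      rw [hk]; exact_mod_cast (by linarith : k < k + δ)
    exact (frequently_lt_of_liminf_lt (h := h)).mono fun r hr => EReal.coe_lt_coe_iff.1 hr
  -- eventually r ∈ D, r1 < r, ψ r1 ≤ η * ψ r
  have hev2 : ∀ᶠ r in densFilter R,
      r ∈ psiDomain r0 R ∧ r1 < r ∧ ψ r1 ≤ η * ψ r := by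
    have e1 := densFilter_eventually_gt hr0R
    have e2 := densFilter_eventually_gt hr1D.2
    have e3 : ∀ᶠ r in densFilter R, ψ r1 / η ≤ ψ r :=
      hψ.unbounded.eventually (eventually_ge_atTop (ψ r1 / η))
    refine ((e1.and e2).and e3).mono ?_
    rintro r ⟨⟨hrd, hr1r⟩, hr3⟩
    refine ⟨hrd, hr1r.1, ?_⟩
    rw [div_le_iff₀ hη] at hr3
    calc ψ r1 ≤ ψ r * η := hr3
      _ = η * ψ r := mul_comm _ _
  have hfreq2 := hfreq.and_eventually hev2
  have hfinal : ∃ᶠ r in densFilter R, 1 - (k + δ) / (k + ε) - η ≤ f r := by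
    refine hfreq2.mono ?_
    rintro t ⟨hφt, htD, hr1t, hψη⟩
    have hkey := key_estimate hψ hmono hk0 hδ hδε hr1D H1 htD hr1t hφt
    have hψt : 0 < ψ t := hψ.pos t htD
    have step1 : (ψ t - (k + δ) / (k + ε) * ψ t - ψ r1) / ψ t ≤ f t := by
      rw [hf]
      exact div_le_div_of_nonneg_right hkey hψt.le
    have hexp : (ψ t - (k + δ) / (k + ε) * ψ t - ψ r1) / ψ t
        = 1 - (k + δ) / (k + ε) - ψ r1 / ψ t := by
      rw [sub_div, sub_div, div_self hψt.ne', mul_div_assoc, div_self hψt.ne', mul_one]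
    have hdiv : ψ r1 / ψ t ≤ η := (div_le_iff₀ hψt).2 (by linarith [hψη])
    linarith [step1, hexp ▸ step1]
  have := le_limsup_of_frequently_le hfinal hb
  have hid : 1 - (k + δ) / (k + ε) = ε / (k + ε) - δ / (k + ε) := by
    field_simp
    ring
  linarith
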